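/- Let $K \le k$ be real numbers. Then the function $r \mapsto \dfrac{\sin_k(r)}{\sin_K(r)}$ is monotone nonincreasing on the interval $(0, \pi/\sqrt{k})$ if $k > 0$, and on $(0, \infty)$ if $k \le 0$. -/

import Mathlib

open Real MeasureTheory Set Filter

/-- The generalized sine function `sin_m`. -/
noncomputable def sinm (m r : ℝ) : ℝ :=
  if 0 < m then Real.sin (Real.sqrt m * r) / Real.sqrt m
  else if m = 0 then r
  else Real.sinh (Real.sqrt (-m) * r) / Real.sqrt (-m)

/-- The derivative `sin_m'` of the generalized sine function. -/
noncomputable def sinm' (m r : ℝ) : ℝ :=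
  if 0 < m then Real.cos (Real.sqrt m * r)
  else if m = 0 then 1
  else Real.cosh (Real.sqrt (-m) * r)

/-! The Wronskian `W = sin_k' sin_K - sin_k sin_K'` vanishes at `0` and, since `sin_m'' = -m sin_m`,
has derivative `(K - k) sin_k sin_K ≤ 0` as long as both sines are positive. Hence `W ≤ 0` there,
and `W / sin_K²` is the derivative of `sin_k / sin_K`. -/

/-- The maximal interval `(0, r₀)` on which `sin_m` is positive. -/
def sinmPosInterval (m : ℝ) : Set ℝ :=
  if 0 < m then Ioo 0 (π / √m) else Ioi 0

lemma Convex.antitoneOn_of_hasDerivAt_nonpos {D : Set ℝ} (hD : Convex ℝ D) {f f' : ℝ → ℝ}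
    (hf : ∀ x ∈ D, HasDerivAt f (f' x) x) (hf' : ∀ x ∈ D, f' x ≤ 0) : AntitoneOn f D :=
  antitoneOn_of_hasDerivWithinAt_nonpos hD (fun x hx => (hf x hx).continuousAt.continuousWithinAt)
    (fun x hx => (hf x (interior_subset hx)).hasDerivWithinAt) fun x hx => hf' x (interior_subset hx)

lemma neg_pos_of_not_pos_of_ne_zero {m : ℝ} (h₁ : ¬0 < m) (h₂ : m ≠ 0) : 0 < -m :=
  neg_pos.2 <| (not_lt.1 h₁).lt_of_ne h₂

lemma sinm_zero (m : ℝ) : sinm m 0 = 0 := by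
  unfold sinm; split_ifs <;> simp

lemma hasDerivAt_sinm (m r : ℝ) : HasDerivAt (sinm m) (sinm' m r) r := by
  unfold sinm sinm'
  split_ifs with h₁ h₂
  · have hm : √m ≠ 0 := by positivity
    refine ((((hasDerivAt_id' r).const_mul √m).sin).div_const √m).congr_deriv ?_
    field_simp
  · exact hasDerivAt_id' r
  · have hm : √(-m) ≠ 0 := (sqrt_pos.2 (neg_pos_of_not_pos_of_ne_zero h₁ h₂)).ne'
    refine ((((hasDerivAt_id' r).const_mul √(-m)).sinh).div_const √(-m)).congr_deriv ?_
    field_simp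

lemma hasDerivAt_sinm' (m r : ℝ) : HasDerivAt (sinm' m) (-m * sinm m r) r := by
  unfold sinm sinm'
  split_ifs with h₁ h₂
  · have hm : √m ≠ 0 := by positivity
    refine (((hasDerivAt_id' r).const_mul √m).cos).congr_deriv ?_
    field_simp
    rw [sq_sqrt h₁.le]
    ring
  · simpa [h₂] using hasDerivAt_const r (1 : ℝ)
  · have hm₀ := neg_pos_of_not_pos_of_ne_zero h₁ h₂
    have hm : √(-m) ≠ 0 := (sqrt_pos.2 hm₀).ne'
    refine (((hasDerivAt_id' r).const_mul √(-m)).cosh).congr_deriv ?_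
    field_simp
    rw [sq_sqrt hm₀.le]
    ring

lemma pos_of_mem_sinmPosInterval {m r : ℝ} (hr : r ∈ sinmPosInterval m) : 0 < r := by
  unfold sinmPosInterval at hr
  split_ifs at hr
  exacts [hr.1, hr]

lemma Ioc_subset_sinmPosInterval {m r : ℝ} (hr : r ∈ sinmPosInterval m) :
    Ioc 0 r ⊆ sinmPosInterval m := by
  unfold sinmPosInterval at hr ⊢
  split_ifs at hr ⊢
  exacts [fun x hx => ⟨hx.1, hx.2.trans_lt hr.2⟩, fun x hx => hx.1]

lemma sinmPosInterval_subset {K k : ℝ} (hKk : K ≤ k) : sinmPosInterval k ⊆ sinmPosInterval K := by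
  unfold sinmPosInterval
  split_ifs with hk hK hK
  · exact Ioo_subset_Ioo_right <| div_le_div_of_nonneg_left pi_pos.le (sqrt_pos.2 hK) (sqrt_le_sqrt hKk)
  · exact Ioo_subset_Ioi_self
  · exact absurd (hK.trans_le hKk) hk
  · exact subset_rfl

lemma convex_sinmPosInterval (m : ℝ) : Convex ℝ (sinmPosInterval m) := by
  unfold sinmPosInterval
  split_ifs
  exacts [convex_Ioo _ _, convex_Ioi _]

lemma sinm_pos {m r : ℝ} (hr : r ∈ sinmPosInterval m) : 0 < sinm m r := by
  unfold sinmPosInterval at hr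
  unfold sinm
  split_ifs at hr ⊢ with h₁ h₂
  · have hs : 0 < √m := sqrt_pos.2 h₁
    refine div_pos (sin_pos_of_pos_of_lt_pi (mul_pos hs hr.1) ?_) hs
    calc √m * r < √m * (π / √m) := mul_lt_mul_of_pos_left hr.2 hs
      _ = π := by field_simp
  · exact hr
  · have hs := sqrt_pos.2 (neg_pos_of_not_pos_of_ne_zero h₁ h₂)
    exact div_pos (sinh_pos_iff.2 (mul_pos hs hr)) hs

noncomputable def sinmWronskian (K k r : ℝ) : ℝ :=
  sinm' k r * sinm K r - sinm k r * sinm' K r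

lemma sinmWronskian_zero (K k : ℝ) : sinmWronskian K k 0 = 0 := by
  simp [sinmWronskian, sinm_zero]

lemma hasDerivAt_sinmWronskian (K k x : ℝ) :
    HasDerivAt (sinmWronskian K k) ((K - k) * (sinm k x * sinm K x)) x :=
  (((hasDerivAt_sinm' k x).mul (hasDerivAt_sinm K x)).sub
    ((hasDerivAt_sinm k x).mul (hasDerivAt_sinm' K x))).congr_deriv (by ring)

lemma sinmWronskian_nonpos {K k r : ℝ} (hKk : K ≤ k) (hr : r ∈ sinmPosInterval k) :
    sinmWronskian K k r ≤ 0 := by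
  have hr₀ := pos_of_mem_sinmPosInterval hr
  have hW := hasDerivAt_sinmWronskian K k
  have hanti : AntitoneOn (sinmWronskian K k) (Icc 0 r) := by
    refine antitoneOn_of_hasDerivWithinAt_nonpos (convex_Icc 0 r)
      (fun x _ => (hW x).continuousAt.continuousWithinAt) (fun x _ => (hW x).hasDerivWithinAt) ?_
    intro x hx
    rw [interior_Icc] at hx
    have hxk := Ioc_subset_sinmPosInterval hr (Ioo_subset_Ioc_self hx)
    have hsin := mul_pos (sinm_pos hxk) (sinm_pos (sinmPosInterval_subset hKk hxk))
    nlinarith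
  simpa [sinmWronskian_zero] using hanti (left_mem_Icc.2 hr₀.le) (right_mem_Icc.2 hr₀.le) hr₀.le

lemma hasDerivAt_sinm_div_sinm (K k : ℝ) {x : ℝ} (hx : sinm K x ≠ 0) :
    HasDerivAt (fun r => sinm k r / sinm K r) (sinmWronskian K k x / sinm K x ^ 2) x :=
  (hasDerivAt_sinm k x).div (hasDerivAt_sinm K x) hx

/-- For `K ≤ k`, the ratio `sin_k(r)/sin_K(r)` is monotone nonincreasing on
`(0, π/√k)` when `k > 0` and on `(0, ∞)` when `k ≤ 0`. -/
theorem sinm_ratio_antitone (K k : ℝ) (hKk : K ≤ k) :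
    AntitoneOn (fun r => sinm k r / sinm K r)
      (if 0 < k then Set.Ioo 0 (Real.pi / Real.sqrt k) else Set.Ioi 0) := by
  change AntitoneOn _ (sinmPosInterval k)
  have hderiv : ∀ x ∈ sinmPosInterval k, HasDerivAt (fun r => sinm k r / sinm K r)
      (sinmWronskian K k x / sinm K x ^ 2) x :=
    fun x hx => hasDerivAt_sinm_div_sinm K k (sinm_pos (sinmPosInterval_subset hKk hx)).ne'
  exact (convex_sinmPosInterval k).antitoneOn_of_hasDerivAt_nonpos hderiv
    fun x hx => div_nonpos_of_nonpos_of_nonneg (sinmWronskian_nonpos hKk hx) (sq_nonneg _)
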